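/- arXiv:1806.06028 — 2 statements merged into one kernel-verified Lean document; each statement's English description precedes it below -/
import Mathlib

section
/- If X is a random variable with the Gamma(k, λ) distribution (k, λ > 0), then for every t > 0, E[(-(k-1)/X + 1/λ) · 1{X > t}] = p(t, k, λ), where p(·, k, λ) is the Gamma(k, λ) density. In particular this expectation is nonnegative. -/
open MeasureTheory Real Filter Set Topology

noncomputable def gammaPdf (k l x : ℝ) : ℝ :=
  l ^ (-k) * x ^ (k - 1) * Real.exp (-x / l) / Real.Gamma k

noncomputable def digamma (x : ℝ) : ℝ := deriv Real.Gamma x / Real.Gamma x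

/-!
On `(0, ∞)` the density satisfies `p' = p · ((k - 1) / x - 1 / λ)`, so the integrand weighted by
the density is `-p'`. Its integral over `(t, ∞)` is therefore `p(t) - lim_{x → ∞} p(x) = p(t)`.
-/

theorem integral_comp_eq_integral_smul_of_map_eq_withDensity {Ω α E : Type*}
    [MeasurableSpace Ω] [MeasurableSpace α] [NormedAddCommGroup E] [NormedSpace ℝ E]
    {P : Measure Ω} {μ : Measure α} {X : Ω → α} {g : α → ℝ} {F : α → E}
    (hX : AEMeasurable X P) (hg : Measurable g) (hg_nonneg : ∀ x, 0 ≤ g x)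
    (hlaw : P.map X = μ.withDensity fun x => ENNReal.ofReal (g x))
    (hF : AEStronglyMeasurable F (P.map X)) :
    ∫ ω, F (X ω) ∂P = ∫ x, g x • F x ∂μ := by
  rw [← integral_map hX hF, hlaw]
  change ∫ x, F x ∂μ.withDensity (fun x => ((g x).toNNReal : ENNReal)) = _
  rw [integral_withDensity_eq_integral_smul hg.real_toNNReal]
  simp only [NNReal.smul_def, Real.coe_toNNReal _ (hg_nonneg _)]

theorem gammaPdf_nonneg {k l x : ℝ} (hk : 0 < k) (hl : 0 < l) (hx : 0 ≤ x) :
    0 ≤ gammaPdf k l x := by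
  have := Gamma_pos_of_pos hk
  unfold gammaPdf
  positivity

theorem hasDerivAt_gammaPdf (k l : ℝ) {x : ℝ} (hx : x ≠ 0) :
    HasDerivAt (gammaPdf k l) (gammaPdf k l x * ((k - 1) / x - 1 / l)) x := by
  have hpow : HasDerivAt (fun y : ℝ => y ^ (k - 1)) ((k - 1) * x ^ (k - 1 - 1)) x :=
    hasDerivAt_rpow_const (Or.inl hx)
  have hexp : HasDerivAt (fun y : ℝ => exp (-y / l)) (exp (-x / l) * (-1 / l)) x :=
    ((hasDerivAt_id x).neg.div_const l).exp
  have hfun : gammaPdf k l = fun y => l ^ (-k) * (y ^ (k - 1) * exp (-y / l)) / Gamma k := by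
    funext y
    rw [gammaPdf, mul_assoc]
  rw [hfun]
  refine (((hpow.mul hexp).const_mul (l ^ (-k))).div_const (Gamma k)).congr_deriv ?_
  rw [rpow_sub_one hx]
  ring

theorem tendsto_gammaPdf_atTop {k l : ℝ} (hl : 0 < l) :
    Tendsto (gammaPdf k l) atTop (𝓝 0) := by
  have h := (tendsto_rpow_mul_exp_neg_mul_atTop_nhds_zero (k - 1) (1 / l) (by positivity)).const_mul
    (l ^ (-k) / Gamma k)
  rw [mul_zero] at h
  refine h.congr fun x => ?_
  rw [gammaPdf, show -(1 / l) * x = -x / l by ring]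
  ring

theorem integrableOn_Ioi_gammaPdf {k l : ℝ} (hk : 0 < k) (hl : 0 < l) :
    IntegrableOn (gammaPdf k l) (Ioi 0) := by
  have h := (integrableOn_rpow_mul_exp_neg_mul_rpow (s := k - 1) (by linarith) one_pos
    (one_div_pos.mpr hl)).const_mul (l ^ (-k) / Gamma k)
  refine IntegrableOn.congr_fun h (fun x _ => ?_) measurableSet_Ioi
  rw [gammaPdf, rpow_one, show -(1 / l) * x = -x / l by ring]
  ring

theorem integral_Ioi_gammaPdf_mul {k l t : ℝ} (hk : 0 < k) (hl : 0 < l) (ht : 0 < t) :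
    ∫ x in Ioi t, gammaPdf k l x * (-(k - 1) / x + 1 / l) = gammaPdf k l t := by
  have hint : IntegrableOn (fun x => gammaPdf k l x * ((k - 1) / x - 1 / l)) (Ioi t) := by
    refine ((integrableOn_Ioi_gammaPdf hk hl).mono_set (Ioi_subset_Ioi ht.le)).mul_bdd
      (c := |k - 1| / t + 1 / l) ?_ ?_
    · exact ((measurable_const.div measurable_id).sub measurable_const).aestronglyMeasurable
    · filter_upwards [ae_restrict_mem measurableSet_Ioi] with x (hx : t < x)
      calc ‖(k - 1) / x - 1 / l‖ ≤ |(k - 1) / x| + |1 / l| := abs_sub _ _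
        _ = |k - 1| / x + 1 / l := by
            rw [abs_div, abs_of_pos (ht.trans hx), abs_of_pos (one_div_pos.mpr hl)]
        _ ≤ |k - 1| / t + 1 / l := by gcongr
  have hftc := integral_Ioi_of_hasDerivAt_of_tendsto'
    (fun x hx => hasDerivAt_gammaPdf k l (ht.trans_le hx).ne') hint (tendsto_gammaPdf_atTop hl)
  calc ∫ x in Ioi t, gammaPdf k l x * (-(k - 1) / x + 1 / l)
      = -∫ x in Ioi t, gammaPdf k l x * ((k - 1) / x - 1 / l) := by
        rw [← integral_neg]
        congr with x
        ring
    _ = gammaPdf k l t := by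
        rw [hftc]
        ring

theorem gamma_indicator_expectation_general {Ω : Type*} [MeasurableSpace Ω] (P : Measure Ω)
    (X : Ω → ℝ) (hX : Measurable X)
    (k l : ℝ) (hk : 0 < k) (hl : 0 < l)
    (hlaw : Measure.map X P =
      MeasureTheory.volume.withDensity (fun x => ENNReal.ofReal (if 0 < x then gammaPdf k l x else 0)))
    (t : ℝ) (ht : 0 < t) :
    (∫ ω, (if t < X ω then -(k - 1) / X ω + 1 / l else 0) ∂P) = gammaPdf k l t ∧
    0 ≤ ∫ ω, (if t < X ω then -(k - 1) / X ω + 1 / l else 0) ∂P := by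
  have hg : Measurable fun x : ℝ => if 0 < x then gammaPdf k l x else 0 :=
    Measurable.ite measurableSet_Ioi (by unfold gammaPdf; fun_prop) measurable_const
  have hg_nonneg (x : ℝ) : 0 ≤ if 0 < x then gammaPdf k l x else 0 := by
    split_ifs with hx
    exacts [gammaPdf_nonneg hk hl hx.le, le_rfl]
  have hF : Measurable fun x : ℝ => if t < x then -(k - 1) / x + 1 / l else 0 :=
    Measurable.ite measurableSet_Ioi (by fun_prop) measurable_const
  have hmain : ∫ ω, (if t < X ω then -(k - 1) / X ω + 1 / l else 0) ∂P = gammaPdf k l t := by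
    rw [integral_comp_eq_integral_smul_of_map_eq_withDensity hX.aemeasurable hg hg_nonneg hlaw
      hF.aestronglyMeasurable, ← integral_Ioi_gammaPdf_mul hk hl ht,
      ← integral_indicator measurableSet_Ioi]
    congr with x
    by_cases hx : t < x
    · simp [hx, ht.trans hx]
    · simp [hx]
  exact ⟨hmain, hmain ▸ gammaPdf_nonneg hk hl ht.le⟩

theorem gamma_indicator_expectation {Ω : Type*} [MeasurableSpace Ω] (P : Measure Ω)
    [IsProbabilityMeasure P] (X : Ω → ℝ) (hX : Measurable X)
    (k l : ℝ) (hk : 0 < k) (hl : 0 < l)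
    (hlaw : Measure.map X P =
      MeasureTheory.volume.withDensity (fun x => ENNReal.ofReal (if 0 < x then gammaPdf k l x else 0)))
    (t : ℝ) (ht : 0 < t) :
    (∫ ω, (if t < X ω then -(k - 1) / X ω + 1 / l else 0) ∂P) = gammaPdf k l t ∧
    0 ≤ ∫ ω, (if t < X ω then -(k - 1) / X ω + 1 / l else 0) ∂P :=
  gamma_indicator_expectation_general P X hX k l hk hl hlaw t ht
end

section
/- For every x > 0, the digamma function ψ satisfies -1/(2x) - 1/x² < ψ(x) - log(x) < -1/(2x). -/
/-!
Put `r(x) = ψ(x) - log x`. The functional equation `ψ(x + 1) = ψ(x) + 1/x` gives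
`r(x + 1) - r(x) = 1/x - log (1 + 1/x)`, and log-convexity of `Γ` squeezes `r(x)` between
`-1/x` and `0`, so `r(x) → 0`. Comparing `log (1 + 1/x)` with the trapezoidal rule for `∫ dt/t`
over `[x, x + 1]` shows that `r(x) + 1/(2x)` increases strictly along `x, x + 1, x + 2, …`, while
`r(x) + 1/(2x) + 1/x²` decreases strictly. Both tend to `0`, which gives the two bounds.
-/

open MeasureTheory Real Filter Set Topology

lemma lt_of_tendsto_of_lt_add_one {α : Type*} [Preorder α] [TopologicalSpace α]
    [OrderClosedTopology α] {f : ℝ → α} {a : α} {x : ℝ} (hf : Tendsto f atTop (𝓝 a))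
    (hstep : ∀ y, x ≤ y → f y < f (y + 1)) : f x < a := by
  have hmono : StrictMono fun n : ℕ => f (x + n) :=
    strictMono_nat_of_lt_succ fun n => by
      simpa [add_assoc] using hstep (x + n) (le_add_of_nonneg_right n.cast_nonneg)
  have hlim : Tendsto (fun n : ℕ => f (x + n)) atTop (𝓝 a) :=
    hf.comp (tendsto_atTop_add_const_left _ x tendsto_natCast_atTop_atTop)
  calc f x = f (x + (0 : ℕ)) := by simp
    _ < f (x + (1 : ℕ)) := hmono zero_lt_one
    _ ≤ a := hmono.monotone.ge_of_tendsto hlim 1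

-- With `s = 1/(2x+1)`, `log (1 + 1/x) = ∑ 2 s^(2k+1)/(2k+1)` is dominated termwise by the
-- geometric series `∑ 2 s^(2k+1) = 1/(2x) + 1/(2(x+1))`, strictly from `k = 1` on.
lemma log_one_add_inv_lt {x : ℝ} (hx : 0 < x) :
    log (1 + x⁻¹) < 1 / (2 * x) + 1 / (2 * (x + 1)) := by
  set s := 1 / (2 * x + 1) with hs
  have hs1 : s ^ 2 < 1 := by
    rw [hs, div_pow, one_pow, div_lt_one (by positivity)]
    nlinarith
  have hgeom : HasSum (fun k : ℕ => 2 * s * (s ^ 2) ^ k) (2 * s * (1 - s ^ 2)⁻¹) :=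
    (hasSum_geometric_of_lt_one (by positivity) hs1).mul_left (2 * s)
  have hgeom_sum : 2 * s * (1 - s ^ 2)⁻¹ = 1 / (2 * x) + 1 / (2 * (x + 1)) := by
    have h1s : 1 - s ^ 2 = 4 * x * (x + 1) / (2 * x + 1) ^ 2 := by
      rw [hs]
      field_simp
      ring
    rw [h1s, hs]
    field_simp
    ring
  have hterm (k : ℕ) : (2 : ℝ) * (1 / (2 * k + 1)) * s ^ (2 * k + 1) =
      1 / (2 * k + 1) * (2 * s * (s ^ 2) ^ k) := by ring
  rw [← hgeom_sum]
  refine hasSum_lt (i := 1) (fun k => ?_) ?_ (hasSum_log_one_add_inv hx) hgeom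
  · rw [hterm]
    exact mul_le_of_le_one_left (by positivity) (div_le_one_of_le₀ (by linarith) (by positivity))
  · rw [hterm]
    exact mul_lt_of_lt_one_left (by positivity) (by norm_num)

lemma lt_log_one_add_inv {x : ℝ} (hx : 0 < x) :
    1 / (2 * x) + 1 / (2 * (x + 1)) - (1 / x ^ 2 - 1 / (x + 1) ^ 2) < log (1 + x⁻¹) := by
  have hgap : 2 / (2 * x + 1) - (1 / (2 * x) + 1 / (2 * (x + 1)) - (1 / x ^ 2 - 1 / (x + 1) ^ 2))
      = (7 * x ^ 2 + 7 * x + 2) / (2 * x ^ 2 * (x + 1) ^ 2 * (2 * x + 1)) := by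
    field_simp
    ring
  have hlog : 2 / (2 * x + 1) < log (1 + x⁻¹) := by
    convert lt_log_one_add_of_pos (inv_pos.mpr hx) using 1
    field_simp
    ring
  have : 0 ≤ (7 * x ^ 2 + 7 * x + 2) / (2 * x ^ 2 * (x + 1) ^ 2 * (2 * x + 1)) := by positivity
  linarith

lemma hasDerivAt_log_Gamma {x : ℝ} (hx : 0 < x) :
    HasDerivAt (fun y => log (Gamma y)) (digamma x) x :=
  (differentiableAt_Gamma fun m => ((neg_nonpos.mpr m.cast_nonneg).trans_lt hx).ne').hasDerivAt.log
    (Gamma_pos_of_pos hx).ne'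

lemma digamma_add_one {x : ℝ} (hx : 0 < x) : digamma (x + 1) = digamma x + x⁻¹ := by
  have hshift : HasDerivAt (fun y => log (Gamma (y + 1))) (digamma (x + 1)) x :=
    (hasDerivAt_log_Gamma (by linarith)).comp_add_const x 1
  have hsum : HasDerivAt (fun y => log y + log (Gamma y)) (x⁻¹ + digamma x) x :=
    (hasDerivAt_log hx.ne').add (hasDerivAt_log_Gamma hx)
  have heq : (fun y => log (Gamma (y + 1))) =ᶠ[𝓝 x] fun y => log y + log (Gamma y) := by
    filter_upwards [lt_mem_nhds hx] with y hy
    rw [Gamma_add_one hy.ne', log_mul hy.ne' (Gamma_pos_of_pos hy).ne']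
  rw [hshift.unique (hsum.congr_of_eventuallyEq heq), add_comm]

lemma slope_log_Gamma_add_one {x : ℝ} (hx : 0 < x) :
    slope (log ∘ Gamma) x (x + 1) = log x := by
  rw [slope_def_field, Function.comp_apply, Function.comp_apply, Gamma_add_one hx.ne',
    log_mul hx.ne' (Gamma_pos_of_pos hx).ne']
  ring

lemma digamma_le_log {x : ℝ} (hx : 0 < x) : digamma x ≤ log x := by
  rw [← slope_log_Gamma_add_one hx]
  exact convexOn_log_Gamma.le_slope_of_hasDerivAt hx (mem_Ioi.mpr (by linarith)) (by linarith)
    (hasDerivAt_log_Gamma hx)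

lemma log_sub_inv_le_digamma {x : ℝ} (hx : 0 < x) : log x - x⁻¹ ≤ digamma x := by
  have := convexOn_log_Gamma.slope_le_of_hasDerivAt (x := x) (y := x + 1) hx
    (mem_Ioi.mpr (by linarith)) (by linarith) (hasDerivAt_log_Gamma (by linarith))
  rw [slope_log_Gamma_add_one hx, digamma_add_one hx] at this
  linarith

lemma tendsto_digamma_sub_log : Tendsto (fun x => digamma x - log x) atTop (𝓝 0) := by
  have hlow : Tendsto (fun x : ℝ => -x⁻¹) atTop (𝓝 0) := by
    simpa using (tendsto_inv_atTop_zero : Tendsto (fun x : ℝ => x⁻¹) atTop (𝓝 0)).neg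
  refine tendsto_of_tendsto_of_tendsto_of_le_of_le' hlow tendsto_const_nhds ?_ ?_
  · filter_upwards [eventually_gt_atTop 0] with x hx
    linarith [log_sub_inv_le_digamma hx]
  · filter_upwards [eventually_gt_atTop 0] with x hx
    linarith [digamma_le_log hx]

lemma digamma_sub_log_add_one {x : ℝ} (hx : 0 < x) :
    digamma (x + 1) - log (x + 1) = digamma x - log x + (x⁻¹ - log (1 + x⁻¹)) := by
  have : 1 + x⁻¹ = (x + 1) / x := by field_simp
  rw [digamma_add_one hx, this, log_div (by linarith) hx.ne']
  ring

theorem digamma_log_bounds (x : ℝ) (hx : 0 < x) :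
    -1 / (2 * x) - 1 / x ^ 2 < digamma x - Real.log x ∧
    digamma x - Real.log x < -1 / (2 * x) := by
  have hhalf : Tendsto (fun y : ℝ => 1 / (2 * y)) atTop (𝓝 0) :=
    tendsto_const_nhds.div_atTop (tendsto_id.const_mul_atTop two_pos)
  have hsq : Tendsto (fun y : ℝ => 1 / y ^ 2) atTop (𝓝 0) :=
    tendsto_const_nhds.div_atTop (tendsto_pow_atTop two_ne_zero)
  have hinv (y : ℝ) : y⁻¹ = 1 / (2 * y) + 1 / (2 * y) := by ring
  have hupper : digamma x - log x + 1 / (2 * x) < 0 := by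
    refine lt_of_tendsto_of_lt_add_one (f := fun y => digamma y - log y + 1 / (2 * y))
      (by simpa only [add_zero] using tendsto_digamma_sub_log.add hhalf) fun y hy => ?_
    have hy : 0 < y := hx.trans_le hy
    rw [digamma_sub_log_add_one hy]
    linarith [log_one_add_inv_lt hy, hinv y]
  have hlower : -(digamma x - log x + 1 / (2 * x) + 1 / x ^ 2) < 0 := by
    refine lt_of_tendsto_of_lt_add_one
      (f := fun y => -(digamma y - log y + 1 / (2 * y) + 1 / y ^ 2))
      (by simpa only [add_zero, neg_zero] using ((tendsto_digamma_sub_log.add hhalf).add hsq).neg)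
      fun y hy => ?_
    have hy : 0 < y := hx.trans_le hy
    rw [digamma_sub_log_add_one hy]
    linarith [lt_log_one_add_inv hy, hinv y]
  rw [neg_div]
  constructor <;> linarith
end
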